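/- Let s be a finite index set (a Finset I), let a, b : I → ℝ, let δ ≥ 0 and let k > δ be real numbers. Define the cut-off [x]_k = x if x ≥ k and [x]_k = 0 otherwise. If |a(i) − b(i)| ≤ δ for every i in s, and b is nonnegative on s, then Σ_{i ∈ s} [a(i)]_k ≤ (k/(k − δ)) · Σ_{i ∈ s} [b(i)]_{k−δ}. -/
import Mathlib

/-- Lowering the threshold: if `|a i − b i| ≤ δ` termwise and `b` is nonnegative, then
the cut-off sum of `a` at threshold `k > δ` is at most `k/(k−δ)` times the cut-off sum
of `b` at threshold `k − δ`. -/
theorem cutoff_threshold_drop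
    {I : Type*} (s : Finset I) (a b : I → ℝ) (δ k : ℝ)
    (hδ : 0 ≤ δ) (hk : δ < k)
    (hab : ∀ i ∈ s, |a i - b i| ≤ δ)
    (hb : ∀ i ∈ s, 0 ≤ b i) :
    (∑ i ∈ s, if k ≤ a i then a i else 0) ≤
      (k / (k - δ)) * ∑ i ∈ s, if k - δ ≤ b i then b i else 0 := by
  rw [Finset.mul_sum]
  apply Finset.sum_le_sum
  intro i hi
  have h1 := hab i hi
  have h2 := hb i hi
  have hkδ : (0:ℝ) < k - δ := by linarith
  rw [abs_le] at h1
  split_ifs with h h' h'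
  · rw [div_mul_eq_mul_div, le_div_iff₀ hkδ]
    nlinarith
  · exfalso; linarith
  · exact mul_nonneg (div_nonneg (by linarith) hkδ.le) h2
  · simp
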